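/- arXiv:1601.06142 — 3 statements merged into one kernel-verified Lean document; each statement's English description precedes it below -/
import Mathlib

section
/- Let ζ ∈ C^s(ℝ^n) ∩ W^s_1(ℝ^n) be a compactly supported kernel of order k (i.e., ζ ∈ 𝒦_c^{k,s}) and let α be a multi-index with |α| < s − n. Then for every p ∈ [1, ∞] there is a constant C > 0 such that for all ε > h > 0, ‖∂^α ζ_ε‖_{p,h} ≤ C ε^{−n/q − |α|}, where 1/p + 1/q = 1. -/
open MeasureTheory ENNReal Metric Finset

noncomputable def pderiv {n : ℕ} (i : Fin n) (f : (Fin n → ℝ) → ℝ) : (Fin n → ℝ) → ℝ :=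
  fun x => fderiv ℝ f x (Pi.single i 1)

noncomputable def mderiv {n : ℕ} (α : Fin n → ℕ) (f : (Fin n → ℝ) → ℝ) : (Fin n → ℝ) → ℝ :=
  (List.finRange n).foldr (fun i g => (pderiv i)^[α i] g) f

def msize {n : ℕ} (α : Fin n → ℕ) : ℕ := ∑ i, α i

noncomputable def scaledKernel {n : ℕ} (ζ : (Fin n → ℝ) → ℝ) (ε : ℝ) : (Fin n → ℝ) → ℝ :=
  fun x => (ε ^ n)⁻¹ * ζ (ε⁻¹ • x)

def grid {n : ℕ} (h : ℝ) (i : Fin n → ℤ) : Fin n → ℝ := fun j => h * (i j : ℝ)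

def MemW {n : ℕ} (s : ℕ) (p : ℝ≥0∞) (f : (Fin n → ℝ) → ℝ) : Prop :=
  ∀ α : Fin n → ℕ, msize α ≤ s → MemLp (mderiv α f) p volume

noncomputable def sobolevSeminorm {n : ℕ} (ℓ : ℕ) (p : ℝ≥0∞) (f : (Fin n → ℝ) → ℝ) : ℝ≥0∞ :=
  ∑ α ∈ Finset.univ.filter (fun α : Fin n → Fin (ℓ + 1) => ∑ i, (α i : ℕ) = ℓ),
    eLpNorm (mderiv (fun i => (α i : ℕ)) f) p volume

noncomputable def sobolevNorm {n : ℕ} (ℓ : ℕ) (p : ℝ≥0∞) (f : (Fin n → ℝ) → ℝ) : ℝ≥0∞ :=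
  ∑ α ∈ Finset.univ.filter (fun α : Fin n → Fin (ℓ + 1) => ∑ i, (α i : ℕ) ≤ ℓ),
    eLpNorm (mderiv (fun i => (α i : ℕ)) f) p volume

noncomputable def discNorm {n : ℕ} (p : ℝ≥0∞) (h : ℝ) (g : (Fin n → ℤ) → ℝ) : ℝ≥0∞ :=
  if p = ∞ then ⨆ i, (‖g i‖₊ : ℝ≥0∞)
  else (∑' i : Fin n → ℤ, ENNReal.ofReal (h ^ n * |g i| ^ p.toReal)) ^ (1 / p.toReal)

structure IsKernelOfOrder (n k : ℕ) (ζ : (Fin n → ℝ) → ℝ) : Prop where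
  cont : Continuous ζ
  integrable : Integrable ζ
  unit_mass : ∫ x, ζ x = 1
  moments : ∀ α : Fin n → ℕ, 1 ≤ msize α → msize α ≤ k - 1 →
      ∫ x : Fin n → ℝ, (∏ i, x i ^ α i) * ζ x = 0
  absMoment : Integrable (fun x : Fin n → ℝ => ‖x‖ ^ k * |ζ x|)

noncomputable def quasiInterp {n : ℕ} (h ε : ℝ) (ζ : (Fin n → ℝ) → ℝ)
    (c : (Fin n → ℤ) → ℝ) : (Fin n → ℝ) → ℝ :=
  fun x => h ^ n * ∑' j : Fin n → ℤ, c j * scaledKernel ζ ε (x - grid h j)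

/-!
Dilation commutes with differentiation up to the chain-rule factor, so
`∂^α ζ_ε x = ε^(-n-|α|) (∂^α ζ)(x / ε)`. Since `∂^α ζ` is continuous with compact support, it is
bounded by some `M` and supported in a ball of radius `R`; hence `∂^α ζ_ε` is bounded by
`M ε^(-n-|α|)` and supported in the ball of radius `R ε`. That ball contains at most
`(2 R ε / h + 1)^n ≤ ((2 R + 1) ε / h)^n` grid points when `h < ε`, so
`‖∂^α ζ_ε‖_{p,h} ≤ ((2 R + 1) ε)^(n/p) M ε^(-n-|α|)`, and `n/p - n = -n/q`.
-/

section PartialDerivatives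

variable {n : ℕ}

lemma contDiff_pderiv {m : ℕ} {f : (Fin n → ℝ) → ℝ} (i : Fin n)
    (hf : ContDiff ℝ (m + 1 : ℕ) f) : ContDiff ℝ m (pderiv i f) :=
  (hf.fderiv_right (by norm_cast)).clm_apply contDiff_const

lemma hasCompactSupport_pderiv {f : (Fin n → ℝ) → ℝ} (hf : HasCompactSupport f) (i : Fin n) :
    HasCompactSupport (pderiv i f) :=
  hf.fderiv_apply ℝ (Pi.single i 1)

lemma pderiv_comp_smul (i : Fin n) (f : (Fin n → ℝ) → ℝ) (c a : ℝ) :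
    pderiv i (fun x => c * f (a • x)) = fun x => c * a * pderiv i f (a • x) := by
  have hsmul : (fun x => c * f (a • x)) = c • (f <| a • ·) := rfl
  ext x
  rw [pderiv, hsmul, fderiv_const_smul_field, Pi.smul_apply, fderiv_comp_smul]
  simp only [FunLike.coe_smul, Pi.smul_apply, smul_eq_mul, pderiv, mul_assoc]

def derivDirections (α : Fin n → ℕ) : List (Fin n) :=
  (List.finRange n).flatMap fun i => List.replicate (α i) i

lemma length_derivDirections (α : Fin n → ℕ) : (derivDirections α).length = msize α := by
  simp [derivDirections, msize, Fin.sum_univ_def]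

lemma foldr_pderiv_replicate (i : Fin n) (j : ℕ) (f : (Fin n → ℝ) → ℝ) :
    (List.replicate j i).foldr pderiv f = (pderiv i)^[j] f := by
  induction j with
  | zero => rfl
  | succ j ih => rw [List.replicate_succ, List.foldr_cons, ih, Function.iterate_succ_apply']

lemma mderiv_eq_foldr_pderiv (α : Fin n → ℕ) (f : (Fin n → ℝ) → ℝ) :
    mderiv α f = (derivDirections α).foldr pderiv f := by
  rw [mderiv, derivDirections]
  induction List.finRange n with
  | nil => rfl
  | cons i l ih =>
    rw [List.foldr_cons, ih, List.flatMap_cons, List.foldr_append, foldr_pderiv_replicate]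

lemma contDiff_foldr_pderiv {m : ℕ} {f : (Fin n → ℝ) → ℝ} (l : List (Fin n))
    (hf : ContDiff ℝ (m + l.length : ℕ) f) : ContDiff ℝ m (l.foldr pderiv f) := by
  induction l generalizing m with
  | nil => simpa using hf
  | cons i l ih =>
    refine contDiff_pderiv i (ih ?_)
    rwa [List.length_cons, ← add_assoc, Nat.add_right_comm] at hf

lemma hasCompactSupport_foldr_pderiv {f : (Fin n → ℝ) → ℝ} (hf : HasCompactSupport f)
    (l : List (Fin n)) : HasCompactSupport (l.foldr pderiv f) := by
  induction l with
  | nil => exact hf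
  | cons i l ih => exact hasCompactSupport_pderiv ih i

lemma foldr_pderiv_comp_smul (l : List (Fin n)) (f : (Fin n → ℝ) → ℝ) (c a : ℝ) :
    l.foldr pderiv (fun x => c * f (a • x)) =
      fun x => c * a ^ l.length * l.foldr pderiv f (a • x) := by
  induction l with
  | nil => simp
  | cons i l ih =>
    rw [List.foldr_cons, ih, pderiv_comp_smul, List.length_cons, pow_succ, mul_assoc c]
    rfl

lemma continuous_mderiv {f : (Fin n → ℝ) → ℝ} (α : Fin n → ℕ)
    (hf : ContDiff ℝ (msize α) f) : Continuous (mderiv α f) := by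
  rw [mderiv_eq_foldr_pderiv]
  exact (contDiff_foldr_pderiv (m := 0) _ (by rwa [zero_add, length_derivDirections])).continuous

lemma hasCompactSupport_mderiv {f : (Fin n → ℝ) → ℝ} (hf : HasCompactSupport f)
    (α : Fin n → ℕ) : HasCompactSupport (mderiv α f) := by
  rw [mderiv_eq_foldr_pderiv]
  exact hasCompactSupport_foldr_pderiv hf _

lemma mderiv_comp_smul (α : Fin n → ℕ) (f : (Fin n → ℝ) → ℝ) (c a : ℝ) :
    mderiv α (fun x => c * f (a • x)) = fun x => c * a ^ msize α * mderiv α f (a • x) := by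
  simp only [mderiv_eq_foldr_pderiv, foldr_pderiv_comp_smul, length_derivDirections]

lemma mderiv_scaledKernel (α : Fin n → ℕ) (ζ : (Fin n → ℝ) → ℝ) (ε : ℝ) :
    mderiv α (scaledKernel ζ ε) = fun x => (ε ^ (n + msize α))⁻¹ * mderiv α ζ (ε⁻¹ • x) := by
  change mderiv α (fun x => (ε ^ n)⁻¹ * ζ (ε⁻¹ • x)) = _
  rw [mderiv_comp_smul, pow_add, mul_inv, inv_pow]

end PartialDerivatives

section DiscreteNorm

variable {n : ℕ}

/-- `p⁻¹.toReal` is `1 / p` for finite `p` and `0` for `p = ∞`, so one bound covers both branches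
of `discNorm`. -/
lemma discNorm_le_of_support_subset {p : ℝ≥0∞} (hp : p ≠ 0) {h M : ℝ} (hh : 0 ≤ h)
    {g : (Fin n → ℤ) → ℝ} (hM : ∀ i, |g i| ≤ M) {T : Finset (Fin n → ℤ)}
    (hT : Function.support g ⊆ T) :
    discNorm p h g ≤ ENNReal.ofReal ((h ^ n * #T) ^ p⁻¹.toReal * M) := by
  have hM0 : 0 ≤ M := (abs_nonneg _).trans (hM 0)
  rw [discNorm]
  split_ifs with htop
  · rw [htop, inv_top, toReal_zero, Real.rpow_zero, one_mul]
    refine iSup_le fun i => ?_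
    rw [← enorm_eq_nnnorm, Real.enorm_eq_ofReal_abs]
    exact ENNReal.ofReal_le_ofReal (hM i)
  set r := p.toReal
  have hr : 0 < r := toReal_pos hp htop
  have hvanish : ∀ i ∉ T, ENNReal.ofReal (h ^ n * |g i| ^ r) = 0 := fun i hi => by
    rw [Function.notMem_support.mp (fun hi' => hi (hT hi')), abs_zero, Real.zero_rpow hr.ne',
      mul_zero, ENNReal.ofReal_zero]
  have hsum : ∑ i ∈ T, ENNReal.ofReal (h ^ n * |g i| ^ r) ≤ ENNReal.ofReal (h ^ n * #T * M ^ r) :=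
    calc ∑ i ∈ T, ENNReal.ofReal (h ^ n * |g i| ^ r)
        ≤ ∑ _i ∈ T, ENNReal.ofReal (h ^ n * M ^ r) := by
          gcongr with i
          exact hM i
      _ = ENNReal.ofReal (h ^ n * #T * M ^ r) := by
          rw [sum_const, nsmul_eq_mul, ← ENNReal.ofReal_natCast, ← ENNReal.ofReal_mul (by positivity)]
          ring_nf
  rw [tsum_eq_sum hvanish, toReal_inv, ← one_div]
  calc (∑ i ∈ T, ENNReal.ofReal (h ^ n * |g i| ^ r)) ^ (1 / r)
      ≤ ENNReal.ofReal (h ^ n * #T * M ^ r) ^ (1 / r) := by gcongr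
    _ = ENNReal.ofReal ((h ^ n * #T) ^ (1 / r) * M) := by
      rw [ENNReal.ofReal_rpow_of_nonneg (by positivity) (by positivity),
        Real.mul_rpow (by positivity) (by positivity), ← Real.rpow_mul hM0, mul_one_div_cancel hr.ne',
        Real.rpow_one]

lemma card_piFinset_Icc_neg (N : ℕ) :
    (#(Fintype.piFinset fun _ : Fin n => Icc (-(N : ℤ)) N) : ℝ) = (2 * N + 1) ^ n := by
  rw [Fintype.card_piFinset, prod_const, card_univ, Fintype.card_fin, Int.card_Icc,
    show (N + 1 - -N : ℤ) = ((2 * N + 1 : ℕ) : ℤ) by push_cast; ring, Int.toNat_natCast]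
  push_cast
  rfl

lemma discNorm_comp_grid_le {p : ℝ≥0∞} (hp : p ≠ 0) {h ρ M : ℝ} (hh : 0 < h) (hρ : 0 ≤ ρ)
    {f : (Fin n → ℝ) → ℝ} (hM : ∀ x, |f x| ≤ M) (hf : Function.support f ⊆ closedBall 0 ρ) :
    discNorm p h (fun i => f (grid h i)) ≤
      ENNReal.ofReal (((2 * ρ + h) ^ n) ^ p⁻¹.toReal * M) := by
  set N := ⌊ρ / h⌋₊
  have hsupp : Function.support (fun i => f (grid h i)) ⊆
      Fintype.piFinset fun _ : Fin n => Icc (-(N : ℤ)) N := by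
    intro i hi
    have hball := mem_closedBall_zero_iff.mp (hf hi)
    rw [mem_coe, Fintype.mem_piFinset]
    intro j
    rw [mem_Icc, ← abs_le]
    have hj : |h * (i j : ℝ)| ≤ ρ := (norm_le_pi_norm (grid h i) j).trans hball
    rw [abs_mul, abs_of_pos hh, ← le_div_iff₀' hh, ← Int.cast_abs, ← Nat.cast_natAbs] at hj
    rw [← Int.natCast_natAbs, Nat.cast_le]
    exact Nat.le_floor (mod_cast hj)
  have hM0 : 0 ≤ M := (abs_nonneg _).trans (hM 0)
  refine (discNorm_le_of_support_subset hp hh.le (fun i => hM _) hsupp).trans ?_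
  gcongr
  rw [card_piFinset_Icc_neg, ← mul_pow]
  gcongr
  have hNh : N * h ≤ ρ := (le_div_iff₀ hh).mp (Nat.floor_le (div_nonneg hρ hh.le))
  linarith

end DiscreteNorm

section ScaledKernel

variable {n : ℕ} {α : Fin n → ℕ} {ζ : (Fin n → ℝ) → ℝ} {ε : ℝ}

lemma abs_mderiv_scaledKernel_le {M : ℝ} (hε : 0 < ε) (hM : ∀ x, |mderiv α ζ x| ≤ M)
    (x : Fin n → ℝ) : |mderiv α (scaledKernel ζ ε) x| ≤ M / ε ^ (n + msize α) := by
  rw [mderiv_scaledKernel, abs_mul, abs_inv, abs_of_pos (by positivity), inv_mul_eq_div]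
  gcongr
  exact hM _

lemma support_mderiv_scaledKernel_subset {R : ℝ} (hε : 0 < ε)
    (hR : Function.support (mderiv α ζ) ⊆ closedBall 0 R) :
    Function.support (mderiv α (scaledKernel ζ ε)) ⊆ closedBall 0 (R * ε) := by
  intro x hx
  rw [mderiv_scaledKernel, Function.mem_support] at hx
  have hxR := mem_closedBall_zero_iff.mp (hR (right_ne_zero_of_mul hx))
  rw [norm_smul, norm_inv, Real.norm_of_nonneg hε.le, inv_mul_le_iff₀ hε, mul_comm] at hxR
  exact mem_closedBall_zero_iff.mpr hxR

end ScaledKernel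

/-- This includes `q = ∞`, where `q.toReal = 0` and `x / 0 = 0`. -/
lemma div_toReal_eq_sub_mul_inv_toReal {p q : ℝ≥0∞} (hpq : 1 / p + 1 / q = 1) (x : ℝ) :
    x / q.toReal = x - x * p⁻¹.toReal := by
  rw [one_div, one_div] at hpq
  have hsum : p⁻¹.toReal + q⁻¹.toReal = 1 := by
    rw [← toReal_add (ne_top_of_le_ne_top one_ne_top (hpq ▸ le_self_add))
      (ne_top_of_le_ne_top one_ne_top (hpq ▸ le_add_self)), hpq, toReal_one]
  rw [div_eq_mul_inv, ← toReal_inv]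
  linear_combination x * hsum

theorem stmt4_general {n : ℕ} (s : ℕ) (ζ : (Fin n → ℝ) → ℝ)
    (hζs : ContDiff ℝ (s : ℕ∞) ζ)
    (hζc : HasCompactSupport ζ)
    (α : Fin n → ℕ) (hα : msize α + n < s) :
    ∀ p q : ℝ≥0∞, 1 ≤ p → 1 / p + 1 / q = 1 →
      ∃ C > (0 : ℝ), ∀ ε h : ℝ, 0 < h → h < ε →
        discNorm p h (fun i => mderiv α (scaledKernel ζ ε) (grid h i))
          ≤ ENNReal.ofReal (C * ε ^ (-((n : ℝ) / q.toReal) - (msize α : ℝ))) := by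
  intro p q hp hpq
  have hζα : ContDiff ℝ (msize α) ζ := hζs.of_le (by exact_mod_cast (by omega : msize α ≤ s))
  have hsupp := hasCompactSupport_mderiv hζc α
  obtain ⟨M₀, hM₀⟩ := (continuous_mderiv α hζα).bounded_above_of_compact_support hsupp
  obtain ⟨M, hM0, hM⟩ : ∃ M > 0, ∀ x, |mderiv α ζ x| ≤ M :=
    ⟨max M₀ 1, by positivity, fun x => (hM₀ x).trans (le_max_left _ _)⟩
  obtain ⟨R, hR0, hR⟩ := hsupp.isBounded.subset_closedBall_lt 0 0
  refine ⟨((2 * R + 1) ^ n) ^ p⁻¹.toReal * M, by positivity, fun ε h hh hhε => ?_⟩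
  have hε := hh.trans hhε
  refine (discNorm_comp_grid_le (zero_lt_one.trans_le hp).ne' hh (by positivity)
    (abs_mderiv_scaledKernel_le hε hM)
    (support_mderiv_scaledKernel_subset hε ((subset_tsupport _).trans hR))).trans
    (ENNReal.ofReal_le_ofReal ?_)
  calc ((2 * (R * ε) + h) ^ n) ^ p⁻¹.toReal * (M / ε ^ (n + msize α))
      ≤ (((2 * R + 1) * ε) ^ n) ^ p⁻¹.toReal * (M / ε ^ (n + msize α)) := by gcongr; linarith
    _ = ((2 * R + 1) ^ n) ^ p⁻¹.toReal * M * ε ^ (n * p⁻¹.toReal - (n + msize α : ℕ)) := by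
      rw [mul_pow, Real.mul_rpow (by positivity) (by positivity), ← Real.rpow_natCast_mul hε.le,
        Real.rpow_sub hε, Real.rpow_natCast]
      ring
    _ = _ := by
      rw [div_toReal_eq_sub_mul_inv_toReal hpq]
      push_cast
      ring_nf

theorem stmt4 {n : ℕ} (k s : ℕ) (ζ : (Fin n → ℝ) → ℝ)
    (hker : IsKernelOfOrder n k ζ) (hζs : ContDiff ℝ (s : ℕ∞) ζ)
    (hζW : MemW s 1 ζ) (hζc : HasCompactSupport ζ)
    (α : Fin n → ℕ) (hα : msize α + n < s) :
    ∀ p q : ℝ≥0∞, 1 ≤ p → 1 / p + 1 / q = 1 →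
      ∃ C > (0 : ℝ), ∀ ε h : ℝ, 0 < h → h < ε →
        discNorm p h (fun i => mderiv α (scaledKernel ζ ε) (grid h i))
          ≤ ENNReal.ofReal (C * ε ^ (-((n : ℝ) / q.toReal) - (msize α : ℝ))) :=
  stmt4_general s ζ hζs hζc α hα
end

section
/- Let ζ be a compactly supported kernel in C^s(ℝ^n) ∩ W^s_1(ℝ^n), (a_i)_{i∈ℤ^n} ∈ ℓ_q with 1/p + 1/q = 1, p ∈ [1, ∞], and let α be a multi-index with |α| < s − n. Then there is a constant C > 0 such that for all ε > h > 0, the function [a](x) = h^n Σ_{j∈ℤ^n} a_j ζ_ε(x − jh) satisfies ‖∂^α[a]‖_{L^∞(ℝ^n)} ≤ C ‖a‖_{q,h} ε^{−n/q − |α|}. -/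
open MeasureTheory ENNReal Metric Finset

/-!
Near a point `x` only the grid points `j` with `‖x - jh‖ ≤ ε (R + 1)` contribute to `[a]`, where
`supp ζ ⊆ B(0, R)`. So `[a]` is locally a finite sum and `∂^α` falls on each scaled kernel, which
contributes `ε^{-n-|α|} sup |∂^α ζ|`. The contributing points form a box of volume
`h^n · #S ≤ ((2R + 3) ε)^n`, and Hölder's inequality on that box bounds `h^n ∑_S |a_j|` by
`(h^n · #S)^{1 - 1/q} ‖a‖_{q,h}`.
-/
open Filter Topology

section PDerivList

variable {n : ℕ}

noncomputable def pderivList (l : List (Fin n)) (f : (Fin n → ℝ) → ℝ) : (Fin n → ℝ) → ℝ :=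
  l.foldr pderiv f

def multiIndexList (α : Fin n → ℕ) : List (Fin n) :=
  (List.finRange n).flatMap fun i => List.replicate (α i) i

@[simp]
lemma pderivList_nil (f : (Fin n → ℝ) → ℝ) : pderivList [] f = f := rfl

@[simp]
lemma pderivList_cons (i : Fin n) (l : List (Fin n)) (f : (Fin n → ℝ) → ℝ) :
    pderivList (i :: l) f = pderiv i (pderivList l f) := rfl

lemma pderivList_append (l₁ l₂ : List (Fin n)) (f : (Fin n → ℝ) → ℝ) :
    pderivList (l₁ ++ l₂) f = pderivList l₁ (pderivList l₂ f) :=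
  List.foldr_append ..

lemma length_multiIndexList (α : Fin n → ℕ) : (multiIndexList α).length = msize α := by
  simp [multiIndexList, List.length_flatMap, msize, Fin.sum_univ_def]

lemma mderiv_eq_pderivList (α : Fin n → ℕ) (f : (Fin n → ℝ) → ℝ) :
    mderiv α f = pderivList (multiIndexList α) f := by
  have hrep : ∀ (k : ℕ) (i : Fin n) (g : (Fin n → ℝ) → ℝ),
      pderivList (List.replicate k i) g = (pderiv i)^[k] g := by
    intro k i g
    induction k with
    | zero => rfl
    | succ k ih => rw [List.replicate_succ, pderivList_cons, ih, Function.iterate_succ_apply']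
  rw [mderiv, multiIndexList]
  induction List.finRange n with
  | nil => rfl
  | cons i l ih =>
    rw [List.foldr_cons, ih, List.flatMap_cons, pderivList_append, hrep]

lemma pderivList_congr_nhds {f g : (Fin n → ℝ) → ℝ} {x : Fin n → ℝ} (l : List (Fin n))
    (hfg : f =ᶠ[𝓝 x] g) : pderivList l f =ᶠ[𝓝 x] pderivList l g := by
  induction l with
  | nil => exact hfg
  | cons i l ih => exact ih.eventuallyEq_nhds.mono fun y hy => by simp [pderiv, hy.fderiv_eq]

lemma ContDiff.pderivList {f : (Fin n → ℝ) → ℝ} {l : List (Fin n)} {m : ℕ}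
    (hf : ContDiff ℝ (l.length + m : ℕ) f) : ContDiff ℝ m (pderivList l f) := by
  induction l generalizing m with
  | nil => simpa using hf
  | cons i l ih =>
    have hl : ContDiff ℝ (l.length + (m + 1) : ℕ) f := by
      simpa [Nat.add_assoc, Nat.add_comm 1 m] using hf
    exact ((ih hl).fderiv_right (by norm_cast)).clm_apply contDiff_const

lemma HasCompactSupport.pderivList {f : (Fin n → ℝ) → ℝ} (hf : HasCompactSupport f)
    (l : List (Fin n)) : HasCompactSupport (pderivList l f) := by
  induction l with
  | nil => exact hf
  | cons i l ih => exact ih.fderiv_apply (𝕜 := ℝ) (Pi.single i 1)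

lemma pderivList_sum {ι : Type*} (l : List (Fin n)) (S : Finset ι)
    (g : ι → (Fin n → ℝ) → ℝ) (hg : ∀ j ∈ S, ContDiff ℝ l.length (g j)) :
    pderivList l (∑ j ∈ S, g j) = ∑ j ∈ S, pderivList l (g j) := by
  induction l with
  | nil => rfl
  | cons i l ih =>
    have hg' : ∀ j ∈ S, ContDiff ℝ (l.length + 1 : ℕ) (g j) := fun j hj => by
      simpa using hg j hj
    rw [pderivList_cons, ih fun j hj => (hg' j hj).of_le (by norm_cast; omega)]
    ext x
    simp only [pderiv, Finset.sum_apply, pderivList_cons]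
    rw [fderiv_sum fun j hj => ((hg' j hj).pderivList.differentiable one_ne_zero).differentiableAt]
    simp

lemma pderiv_const_smul (i : Fin n) (c : ℝ) (f : (Fin n → ℝ) → ℝ) :
    pderiv i (c • f) = c • pderiv i f := by
  ext x
  simp [pderiv, fderiv_const_smul_field]

lemma pderiv_comp_sub_right (i : Fin n) (z : Fin n → ℝ) (f : (Fin n → ℝ) → ℝ) :
    pderiv i (fun y => f (y - z)) = fun y => pderiv i f (y - z) := by
  ext x
  simp only [pderiv, sub_eq_add_neg, fderiv_comp_add_right]

lemma pderiv_scaledKernel (i : Fin n) (f : (Fin n → ℝ) → ℝ) (ε : ℝ) :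
    pderiv i (scaledKernel f ε) = ε⁻¹ • scaledKernel (pderiv i f) ε := by
  have hsk : ∀ g : (Fin n → ℝ) → ℝ, scaledKernel g ε = (ε ^ n)⁻¹ • fun x => g (ε⁻¹ • x) :=
    fun g => rfl
  rw [hsk, hsk, pderiv_const_smul, smul_comm]
  congr 1
  ext x
  simp [pderiv, fderiv_comp_smul]

lemma pderivList_map_of_pderiv_map (T : ((Fin n → ℝ) → ℝ) → (Fin n → ℝ) → ℝ) (c : ℝ)
    (hT : ∀ i f, pderiv i (T f) = c • T (pderiv i f)) (l : List (Fin n))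
    (f : (Fin n → ℝ) → ℝ) : pderivList l (T f) = c ^ l.length • T (pderivList l f) := by
  induction l with
  | nil => simp
  | cons i l ih => rw [pderivList_cons, ih, pderiv_const_smul, hT, smul_smul,
      pderivList_cons, List.length_cons, pow_succ]

lemma pderivList_const_smul (l : List (Fin n)) (c : ℝ) (f : (Fin n → ℝ) → ℝ) :
    pderivList l (c • f) = c • pderivList l f := by
  simpa using pderivList_map_of_pderiv_map (c • ·) 1 (by simp [pderiv_const_smul]) l f

lemma pderivList_comp_sub_right (l : List (Fin n)) (z : Fin n → ℝ) (f : (Fin n → ℝ) → ℝ) :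
    pderivList l (fun y => f (y - z)) = fun y => pderivList l f (y - z) := by
  simpa using pderivList_map_of_pderiv_map (fun g y => g (y - z)) 1
    (by simp [pderiv_comp_sub_right]) l f

lemma pderivList_scaledKernel (l : List (Fin n)) (f : (Fin n → ℝ) → ℝ) (ε : ℝ) :
    pderivList l (scaledKernel f ε) = ε⁻¹ ^ l.length • scaledKernel (pderivList l f) ε :=
  pderivList_map_of_pderiv_map (scaledKernel · ε) ε⁻¹ (fun i g => pderiv_scaledKernel i g ε) l f

end PDerivList

section GridBox

variable {n : ℕ}

noncomputable def gridBox (h r : ℝ) (x : Fin n → ℝ) : Finset (Fin n → ℤ) :=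
  Fintype.piFinset fun i => Finset.Icc ⌈(x i - r) / h⌉ ⌊(x i + r) / h⌋

lemma mem_gridBox_of_norm_le {h r : ℝ} (hh : 0 < h) {x : Fin n → ℝ} {j : Fin n → ℤ}
    (hj : ‖x - grid h j‖ ≤ r) : j ∈ gridBox h r x := by
  rw [gridBox, Fintype.mem_piFinset]
  intro i
  have hi : |x i - h * j i| ≤ r := (norm_le_pi_norm (x - grid h j) i).trans hj
  rw [abs_le] at hi
  rw [Finset.mem_Icc, Int.ceil_le, Int.le_floor, div_le_iff₀ hh, le_div_iff₀ hh]
  constructor <;> linarith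

lemma mul_card_Icc_ceil_floor_le {h r : ℝ} (hh : 0 < h) (hr : 0 ≤ r) (t : ℝ) :
    h * #(Finset.Icc ⌈(t - r) / h⌉ ⌊(t + r) / h⌋) ≤ 2 * r + h := by
  rw [Int.card_Icc]
  have hfloor := Int.floor_le ((t + r) / h)
  have hceil := Int.le_ceil ((t - r) / h)
  have hwidth : (t + r) / h - (t - r) / h = 2 * r / h := by ring
  have hcard : ((⌊(t + r) / h⌋ + 1 - ⌈(t - r) / h⌉).toNat : ℝ) ≤ 2 * r / h + 1 := by
    rcases le_or_gt (⌊(t + r) / h⌋ + 1 - ⌈(t - r) / h⌉) 0 with hz | hz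
    · rw [Int.toNat_of_nonpos hz, Nat.cast_zero]
      positivity
    · rw [← Int.cast_natCast, Int.toNat_of_nonneg hz.le]
      push_cast
      linarith
  calc h * ((⌊(t + r) / h⌋ + 1 - ⌈(t - r) / h⌉).toNat : ℝ) ≤ h * (2 * r / h + 1) := by gcongr
    _ = 2 * r + h := by field_simp

lemma pow_mul_card_gridBox_le {h r : ℝ} (hh : 0 < h) (hr : 0 ≤ r) (x : Fin n → ℝ) :
    h ^ n * #(gridBox h r x) ≤ (2 * r + h) ^ n := by
  rw [gridBox, Fintype.card_piFinset, Nat.cast_prod, ← Fin.prod_const, ← Fin.prod_const,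
    ← Finset.prod_mul_distrib]
  exact Finset.prod_le_prod (fun i _ => by positivity)
    fun i _ => mul_card_Icc_ceil_floor_le hh hr (x i)

end GridBox

section QuasiInterp

variable {n : ℕ} {ζ : (Fin n → ℝ) → ℝ} {R ε h : ℝ}

lemma norm_le_of_scaledKernel_ne_zero (hR : tsupport ζ ⊆ closedBall 0 R) (hε : 0 < ε)
    {v : Fin n → ℝ} (hv : scaledKernel ζ ε v ≠ 0) : ‖v‖ ≤ ε * R := by
  have hmem : ε⁻¹ • v ∈ closedBall (0 : Fin n → ℝ) R :=
    hR (subset_tsupport _ (right_ne_zero_of_mul hv))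
  rwa [mem_closedBall_zero_iff, norm_smul, Real.norm_of_nonneg (inv_nonneg.2 hε.le),
    inv_mul_le_iff₀ hε] at hmem

lemma quasiInterp_eventuallyEq_sum (a : (Fin n → ℤ) → ℝ) (hR : tsupport ζ ⊆ closedBall 0 R)
    (hε : 0 < ε) (hh : 0 < h) (x : Fin n → ℝ) :
    quasiInterp h ε ζ a =ᶠ[𝓝 x]
      h ^ n • ∑ j ∈ gridBox h (ε * (R + 1)) x, a j • fun y => scaledKernel ζ ε (y - grid h j) := by
  filter_upwards [ball_mem_nhds x hε] with y hy
  have hvanish : ∀ j ∉ gridBox h (ε * (R + 1)) x,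
      a j * scaledKernel ζ ε (y - grid h j) = 0 := by
    intro j hj
    by_contra hne
    refine hj (mem_gridBox_of_norm_le hh ?_)
    calc ‖x - grid h j‖ ≤ ‖x - y‖ + ‖y - grid h j‖ := norm_sub_le_norm_sub_add_norm_sub _ _ _
      _ ≤ ε + ε * R := by
        gcongr
        · rw [← dist_eq_norm, dist_comm]; exact hy.le
        · exact norm_le_of_scaledKernel_ne_zero hR hε (right_ne_zero_of_mul hne)
      _ = ε * (R + 1) := by ring
  simp [quasiInterp, tsum_eq_sum hvanish, Finset.mul_sum]

lemma norm_pderivList_quasiInterp_le (a : (Fin n → ℤ) → ℝ) (l : List (Fin n))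
    (hζ : ContDiff ℝ l.length ζ) (hR : tsupport ζ ⊆ closedBall 0 R) {M : ℝ}
    (hM : ∀ y, ‖pderivList l ζ y‖ ≤ M) (hε : 0 < ε) (hh : 0 < h) (x : Fin n → ℝ) :
    ‖pderivList l (quasiInterp h ε ζ a) x‖ ≤
      M / ε ^ (n + l.length) * (h ^ n * ∑ j ∈ gridBox h (ε * (R + 1)) x, |a j|) := by
  have hterm : ∀ j, ContDiff ℝ l.length (a j • fun y => scaledKernel ζ ε (y - grid h j)) :=
    fun j => by unfold scaledKernel; fun_prop
  rw [(pderivList_congr_nhds l (quasiInterp_eventuallyEq_sum a hR hε hh x)).self_of_nhds,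
    pderivList_const_smul, pderivList_sum _ _ _ fun j _ => hterm j]
  simp only [pderivList_const_smul, pderivList_comp_sub_right l _ (scaledKernel ζ ε),
    pderivList_scaledKernel]
  set S := gridBox h (ε * (R + 1)) x
  calc _ = |h ^ n * ∑ j ∈ S,
        a j * (ε⁻¹ ^ l.length * ((ε ^ n)⁻¹ * pderivList l ζ (ε⁻¹ • (x - grid h j))))| := by
        simp [scaledKernel]
    _ ≤ h ^ n * ∑ j ∈ S, |a j| * (ε⁻¹ ^ l.length * ((ε ^ n)⁻¹ * M)) := by
        rw [abs_mul, abs_of_pos (by positivity)]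
        gcongr
        refine (abs_sum_le_sum_abs _ _).trans (Finset.sum_le_sum fun j _ => ?_)
        simp only [abs_mul, abs_pow, abs_inv, abs_of_pos hε]
        gcongr
        exact hM _
    _ = M / ε ^ (n + l.length) * (h ^ n * ∑ j ∈ S, |a j|) := by
        rw [← Finset.sum_mul, pow_add, inv_pow]
        field_simp

end QuasiInterp

section DiscreteHolder

variable {n : ℕ}

/-- For `q = ∞` the exponent is `1`, since `(∞ : ℝ≥0∞).toReal⁻¹ = 0`. -/
lemma ofReal_mul_sum_abs_le_discNorm {q : ℝ≥0∞} (hq : 1 ≤ q) {h : ℝ} (hh : 0 ≤ h)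
    (a : (Fin n → ℤ) → ℝ) (S : Finset (Fin n → ℤ)) :
    ENNReal.ofReal (h ^ n * ∑ j ∈ S, |a j|)
      ≤ ENNReal.ofReal (h ^ n * #S) ^ (1 - q.toReal⁻¹) * discNorm q h a := by
  have hV : 0 ≤ h ^ n := by positivity
  rw [ENNReal.ofReal_mul hV, ENNReal.ofReal_mul hV,
    ENNReal.ofReal_sum_of_nonneg fun j _ => abs_nonneg (a j), ENNReal.ofReal_natCast]
  set V := ENNReal.ofReal (h ^ n)
  by_cases hq_top : q = ∞
  · subst hq_top
    have hsup : ∀ j, ENNReal.ofReal |a j| ≤ ⨆ i, (‖a i‖₊ : ℝ≥0∞) := fun j => by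
      rw [← Real.norm_eq_abs, ofReal_norm]
      exact le_iSup (fun i => (‖a i‖₊ : ℝ≥0∞)) j
    rw [discNorm, if_pos rfl]
    norm_num only [ENNReal.toReal_top, inv_zero, sub_zero, ENNReal.rpow_one, mul_assoc]
    gcongr
    simpa using Finset.sum_le_card_nsmul S _ _ fun j _ => hsup j
  · set p := q.toReal
    have hp : 1 ≤ p := by simpa using ENNReal.toReal_mono hq_top hq
    have hp0 : 0 < p := by linarith
    have hlocal : V * ∑ j ∈ S, ENNReal.ofReal |a j| ^ p
        ≤ ∑' j, ENNReal.ofReal (h ^ n * |a j| ^ p) := by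
      rw [Finset.mul_sum]
      refine le_of_eq_of_le (Finset.sum_congr rfl fun j _ => ?_) (ENNReal.sum_le_tsum S)
      rw [ENNReal.ofReal_mul hV, ENNReal.ofReal_rpow_of_nonneg (abs_nonneg _) hp0.le]
    rw [discNorm, if_neg hq_top, ← ENNReal.rpow_le_rpow_iff hp0]
    calc (V * ∑ j ∈ S, ENNReal.ofReal |a j|) ^ p
        = V ^ p * (∑ j ∈ S, ENNReal.ofReal |a j|) ^ p := ENNReal.mul_rpow_of_nonneg _ _ hp0.le
      _ ≤ V ^ p * ((#S : ℝ≥0∞) ^ (p - 1) * ∑ j ∈ S, ENNReal.ofReal |a j| ^ p) := by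
        gcongr
        exact ENNReal.rpow_sum_le_const_mul_sum_rpow S _ hp
      _ = (V * #S) ^ (p - 1) * (V * ∑ j ∈ S, ENNReal.ofReal |a j| ^ p) := by
        rw [ENNReal.mul_rpow_of_nonneg _ _ (by linarith), ← ENNReal.rpow_one V,
          ← ENNReal.rpow_mul, one_mul, ← sub_add_cancel p 1,
          ENNReal.rpow_add_of_nonneg _ _ (by linarith) zero_le_one, add_sub_cancel_right,
          ENNReal.rpow_one]
        ring
      _ ≤ (V * #S) ^ (p - 1) * ∑' j, ENNReal.ofReal (h ^ n * |a j| ^ p) := by gcongr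
      _ = _ := by
        rw [ENNReal.mul_rpow_of_nonneg _ _ hp0.le, ← ENNReal.rpow_mul, ← ENNReal.rpow_mul,
          one_div, inv_mul_cancel₀ hp0.ne', ENNReal.rpow_one, sub_mul, one_mul,
          inv_mul_cancel₀ hp0.ne']

end DiscreteHolder

lemma rpow_one_sub_div_pow_le {n m : ℕ} {K ε r V : ℝ} (hK : 1 ≤ K) (hε : 0 < ε) (hr0 : 0 ≤ r)
    (hr1 : r ≤ 1) (hV0 : 0 ≤ V) (hV : V ≤ (K * ε) ^ n) :
    V ^ (1 - r) / ε ^ (n + m) ≤ K ^ n * ε ^ (-(n * r) - m) := by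
  have hK0 : 0 ≤ K := zero_le_one.trans hK
  calc V ^ (1 - r) / ε ^ (n + m) ≤ ((K * ε) ^ n) ^ (1 - r) / ε ^ (n + m) := by
        gcongr
    _ = K ^ ((n : ℝ) * (1 - r)) * ε ^ ((n : ℝ) * (1 - r) - (n + m : ℕ)) := by
        rw [← Real.rpow_natCast (K * ε), ← Real.rpow_mul (by positivity),
          Real.mul_rpow hK0 hε.le, Real.rpow_sub hε, Real.rpow_natCast, mul_div_assoc]
    _ ≤ K ^ (n : ℝ) * ε ^ ((n : ℝ) * (1 - r) - (n + m : ℕ)) := by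
        gcongr
        nlinarith [(Nat.cast_nonneg n : (0 : ℝ) ≤ n)]
    _ = K ^ n * ε ^ (-(n * r) - m) := by
        rw [Real.rpow_natCast]
        push_cast
        ring_nf

lemma ENNReal.toReal_inv_le_one {q : ℝ≥0∞} (hq : 1 ≤ q) : q.toReal⁻¹ ≤ 1 := by
  rcases eq_or_ne q ∞ with rfl | hq_top
  · simp
  · exact inv_le_one_of_one_le₀ (by simpa using ENNReal.toReal_mono hq_top hq)

lemma enorm_pderivList_quasiInterp_le {n : ℕ} {ζ : (Fin n → ℝ) → ℝ} {R M ε h : ℝ}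
    {q : ℝ≥0∞} (hq : 1 ≤ q) (a : (Fin n → ℤ) → ℝ) (l : List (Fin n))
    (hζ : ContDiff ℝ l.length ζ) (hR0 : 0 ≤ R) (hR : tsupport ζ ⊆ closedBall 0 R)
    (hM0 : 0 ≤ M) (hM : ∀ y, ‖pderivList l ζ y‖ ≤ M) (hh : 0 < h) (hhε : h < ε)
    (x : Fin n → ℝ) :
    ‖pderivList l (quasiInterp h ε ζ a) x‖ₑ
      ≤ ENNReal.ofReal (M * (2 * R + 3) ^ n * ε ^ (-(n * q.toReal⁻¹) - l.length))
        * discNorm q h a := by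
  have hε := hh.trans hhε
  set S := gridBox h (ε * (R + 1)) x
  have hvol : h ^ n * #S ≤ ((2 * R + 3) * ε) ^ n :=
    (pow_mul_card_gridBox_le hh (by positivity) x).trans (by gcongr; nlinarith)
  calc ‖pderivList l (quasiInterp h ε ζ a) x‖ₑ
      ≤ ENNReal.ofReal (M / ε ^ (n + l.length) * (h ^ n * ∑ j ∈ S, |a j|)) := by
        rw [← ofReal_norm]
        exact ENNReal.ofReal_le_ofReal (norm_pderivList_quasiInterp_le a l hζ hR hM hε hh x)
    _ ≤ ENNReal.ofReal (M / ε ^ (n + l.length))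
          * (ENNReal.ofReal (h ^ n * #S) ^ (1 - q.toReal⁻¹) * discNorm q h a) := by
        rw [ENNReal.ofReal_mul (by positivity)]
        gcongr
        exact ofReal_mul_sum_abs_le_discNorm hq hh.le a S
    _ = ENNReal.ofReal (M * ((h ^ n * #S) ^ (1 - q.toReal⁻¹) / ε ^ (n + l.length)))
          * discNorm q h a := by
        rw [← mul_assoc, ENNReal.ofReal_rpow_of_nonneg (by positivity)
            (sub_nonneg.2 (ENNReal.toReal_inv_le_one hq)),
          ← ENNReal.ofReal_mul (by positivity), mul_div_assoc', div_mul_eq_mul_div]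
    _ ≤ _ := by
        rw [mul_assoc]
        gcongr
        exact rpow_one_sub_div_pow_le (by linarith) hε (by positivity)
          (ENNReal.toReal_inv_le_one hq) (by positivity) hvol

theorem stmt10_general {n : ℕ} (s : ℕ) (p q : ℝ≥0∞) (hpq : 1 / p + 1 / q = 1)
    (ζ : (Fin n → ℝ) → ℝ) (hc : HasCompactSupport ζ)
    (hsmooth : ContDiff ℝ (s : ℕ∞) ζ)
    (a : (Fin n → ℤ) → ℝ)
    (α : Fin n → ℕ) (hα : msize α + n < s) :
    ∃ C > (0 : ℝ), ∀ ε h : ℝ, 0 < h → h < ε →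
      eLpNorm (mderiv α (quasiInterp h ε ζ a)) ∞ volume
        ≤ ENNReal.ofReal (C * ε ^ (-((n : ℝ) / q.toReal) - (msize α : ℝ))) * discNorm q h a := by
  have hq : 1 ≤ q := by
    rw [← ENNReal.inv_le_one, ← one_div]
    exact le_add_self.trans_eq hpq
  set l := multiIndexList α
  have hζ : ContDiff ℝ l.length ζ :=
    hsmooth.of_le (by rw [length_multiIndexList]; exact_mod_cast (by omega : msize α ≤ s))
  obtain ⟨R, hR0, hR⟩ := hc.isBounded.subset_closedBall_lt 0 0
  obtain ⟨M, hM⟩ := (hζ.pderivList (m := 0)).continuous.norm.bounded_above_of_compact_support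
    (hc.pderivList l).norm
  refine ⟨max M 1 * (2 * R + 3) ^ n, by positivity, fun ε h hh hhε => ?_⟩
  rw [mderiv_eq_pderivList, eLpNorm_exponent_top, div_eq_mul_inv (n : ℝ), ← length_multiIndexList]
  exact eLpNormEssSup_le_of_ae_enorm_bound <| ae_of_all _ <|
    enorm_pderivList_quasiInterp_le hq a l hζ hR0.le hR (by positivity)
      (fun y => by simpa using (hM y).trans (le_max_left M 1)) hh hhε

theorem stmt10 {n : ℕ} (s : ℕ) (p q : ℝ≥0∞) (hp : 1 ≤ p) (hpq : 1 / p + 1 / q = 1)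
    (ζ : (Fin n → ℝ) → ℝ) (hc : HasCompactSupport ζ)
    (hsmooth : ContDiff ℝ (s : ℕ∞) ζ) (hW : MemW s 1 ζ)
    (a : (Fin n → ℤ) → ℝ) (ha : Memℓp a q)
    (α : Fin n → ℕ) (hα : msize α + n < s) :
    ∃ C > (0 : ℝ), ∀ ε h : ℝ, 0 < h → h < ε →
      eLpNorm (mderiv α (quasiInterp h ε ζ a)) ∞ volume
        ≤ ENNReal.ofReal (C * ε ^ (-((n : ℝ) / q.toReal) - (msize α : ℝ))) * discNorm q h a :=
  stmt10_general s p q hpq ζ hc hsmooth a α hα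
end

section
/- Stability bound via antisymmetry: let e = (e_i) be a finitely supported real sequence, let Δ_{ij} ∈ ℝ^n with Δ_{ij} = −Δ_{ji}, and let w_{ij} ≥ 0 be symmetric weights (w_{ij} = w_{ji}). If Λ ⊂ ℤ^n × ℤ^n contains exactly one of (i,j), (j,i) for each pair i ≠ j, then |h^{2n} Σ_{(i,j)∈Λ} e_i e_j Δ_{ij} · w_{ij} n_{ij}| ≤ ‖e‖²_{2,h} · max_i h^n Σ_j |Δ_{ij}| w_{ij}, where n_{ij} are unit vectors and ‖e‖²_{2,h} = h^n Σ_i e_i². -/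
open MeasureTheory ENNReal Metric Finset

/-!
Bound each summand by `|e i| |e j| a i j` with `a i j = ‖Δ i j‖ w i j`, enlarge `Λ` to all
pairs of the (finite) support of `e`, and apply `|e i| |e j| ≤ (e i ^ 2 + e j ^ 2) / 2`. Since
`a` is symmetric, the two halves coincide after exchanging `i` and `j`, leaving
`∑ i, e i ^ 2 ∑ j, a i j`, whose inner sums are controlled by `M`.
-/

open Function

theorem norm_tsum_subtype_le_sum_norm {α E : Type*} [NormedAddCommGroup E] {f : α → E}
    (Λ : Set α) (s : Finset α) (hf : support f ⊆ s) :
    ‖∑' p : Λ, f p‖ ≤ ∑ p ∈ s, ‖f p‖ := by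
  rw [_root_.tsum_subtype, tsum_eq_sum fun p hp => Set.indicator_apply_eq_zero.2 fun _ =>
    notMem_support.1 fun hfp => hp (hf hfp)]
  exact (norm_sum_le _ _).trans (sum_le_sum fun p _ => norm_indicator_le_norm_self f p)

theorem Finset.sum_product_abs_mul_abs_mul_le_mul_sum_sq {ι : Type*} (s : Finset ι)
    (e : ι → ℝ) {a : ι → ι → ℝ} (ha0 : ∀ i j, 0 ≤ a i j) (hsymm : ∀ i j, a i j = a j i)
    {R : ℝ} (hrow : ∀ i, ∑ j ∈ s, a i j ≤ R) :
    ∑ p ∈ s ×ˢ s, |e p.1| * |e p.2| * a p.1 p.2 ≤ R * ∑ i ∈ s, e i ^ 2 := by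
  have hswap : ∑ p ∈ s ×ˢ s, e p.2 ^ 2 * a p.1 p.2 = ∑ p ∈ s ×ˢ s, e p.1 ^ 2 * a p.1 p.2 := by
    rw [sum_product, sum_product, sum_comm]
    simp_rw [hsymm]
  calc ∑ p ∈ s ×ˢ s, |e p.1| * |e p.2| * a p.1 p.2
      ≤ ∑ p ∈ s ×ˢ s, (e p.1 ^ 2 * a p.1 p.2 + e p.2 ^ 2 * a p.1 p.2) / 2 := by
        refine sum_le_sum fun p _ => ?_
        nlinarith [two_mul_le_add_sq |e p.1| |e p.2|, sq_abs (e p.1), sq_abs (e p.2),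
          ha0 p.1 p.2]
    _ = ∑ i ∈ s, e i ^ 2 * ∑ j ∈ s, a i j := by
        rw [← sum_div, sum_add_distrib, hswap, add_self_div_two, sum_product]
        simp_rw [mul_sum]
    _ ≤ ∑ i ∈ s, e i ^ 2 * R := sum_le_sum fun i _ => by gcongr; exact hrow i
    _ = R * ∑ i ∈ s, e i ^ 2 := by rw [← sum_mul, mul_comm]

theorem abs_tsum_subtype_mul_mul_le_mul_tsum_sq {ι : Type*} (Λ : Set (ι × ι)) {e : ι → ℝ}
    (he : (support e).Finite) {c a : ι → ι → ℝ} (hca : ∀ i j, |c i j| ≤ a i j)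
    (hsymm : ∀ i j, a i j = a j i) (hsum : ∀ i, Summable (a i))
    {R : ℝ} (hrow : ∀ i, ∑' j, a i j ≤ R) :
    |∑' p : Λ, e p.1.1 * e p.1.2 * c p.1.1 p.1.2| ≤ R * ∑' i, e i ^ 2 := by
  set S := he.toFinset
  have ha0 : ∀ i j, 0 ≤ a i j := fun i j => (abs_nonneg _).trans (hca i j)
  have hsupp : support (fun p : ι × ι => e p.1 * e p.2 * c p.1 p.2) ⊆ ↑(S ×ˢ S) := fun p hp => by
    have hp12 := left_ne_zero_of_mul hp
    exact mem_coe.2 (mem_product.2 ⟨he.mem_toFinset.2 (left_ne_zero_of_mul hp12),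
      he.mem_toFinset.2 (right_ne_zero_of_mul hp12)⟩)
  calc |∑' p : Λ, e p.1.1 * e p.1.2 * c p.1.1 p.1.2|
      ≤ ∑ p ∈ S ×ˢ S, |e p.1 * e p.2 * c p.1 p.2| := norm_tsum_subtype_le_sum_norm Λ _ hsupp
    _ ≤ ∑ p ∈ S ×ˢ S, |e p.1| * |e p.2| * a p.1 p.2 := sum_le_sum fun p _ => by
        rw [abs_mul, abs_mul]; gcongr; exact hca p.1 p.2
    _ ≤ R * ∑ i ∈ S, e i ^ 2 := S.sum_product_abs_mul_abs_mul_le_mul_sum_sq e ha0 hsymm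
        fun i => ((hsum i).sum_le_tsum S fun j _ => ha0 i j).trans (hrow i)
    _ = R * ∑' i, e i ^ 2 := by
        rw [tsum_eq_sum' (by rw [support_pow e two_ne_zero, he.coe_toFinset])]

theorem abs_mul_inner_le_norm_mul {E : Type*} [NormedAddCommGroup E] [InnerProductSpace ℝ E]
    {w : ℝ} (hw : 0 ≤ w) (x : E) {y : E} (hy : ‖y‖ ≤ 1) :
    |w * inner ℝ x y| ≤ ‖x‖ * w := by
  rw [abs_mul, abs_of_nonneg hw, mul_comm]
  gcongr
  exact (abs_real_inner_le_norm x y).trans (mul_le_of_le_one_right (norm_nonneg x) hy)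

theorem stmt13_general {n : ℕ} (h : ℝ) (hh : 0 < h)
    (e : (Fin n → ℤ) → ℝ) (he : (Function.support e).Finite)
    (Δ : (Fin n → ℤ) → (Fin n → ℤ) → EuclideanSpace ℝ (Fin n))
    (hΔ : ∀ i j, Δ i j = -Δ j i)
    (w : (Fin n → ℤ) → (Fin n → ℤ) → ℝ)
    (hw0 : ∀ i j, 0 ≤ w i j) (hws : ∀ i j, w i j = w j i)
    (N : (Fin n → ℤ) → (Fin n → ℤ) → EuclideanSpace ℝ (Fin n))
    (hN : ∀ i j, ‖N i j‖ = 1)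
    (Λ : Set ((Fin n → ℤ) × (Fin n → ℤ)))
    (hsum : ∀ i, Summable fun j => ‖Δ i j‖ * w i j)
    (M : ℝ) (hM : ∀ i, h ^ n * ∑' j, ‖Δ i j‖ * w i j ≤ M) :
    |h ^ (2 * n) * ∑' p : Λ, e p.1.1 * e p.1.2 *
        (w p.1.1 p.1.2 * (inner ℝ (Δ p.1.1 p.1.2) (N p.1.1 p.1.2) : ℝ))|
      ≤ (h ^ n * ∑' i, (e i) ^ 2) * M := by
  have hhn : 0 < h ^ n := pow_pos hh n
  have hbound := abs_tsum_subtype_mul_mul_le_mul_tsum_sq Λ he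
    (c := fun i j => w i j * inner ℝ (Δ i j) (N i j))
    (fun i j => abs_mul_inner_le_norm_mul (hw0 i j) (Δ i j) (hN i j).le)
    (fun i j => by rw [hΔ i j, norm_neg, hws i j]) hsum
    (R := M / h ^ n) fun i => (le_div_iff₀' hhn).2 (hM i)
  calc _ = h ^ n * (h ^ n * |∑' p : Λ, e p.1.1 * e p.1.2 *
        (w p.1.1 p.1.2 * inner ℝ (Δ p.1.1 p.1.2) (N p.1.1 p.1.2))|) := by
        rw [abs_mul, abs_of_nonneg (by positivity), two_mul, pow_add, mul_assoc]
    _ ≤ h ^ n * (h ^ n * (M / h ^ n * ∑' i, e i ^ 2)) := by gcongr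
    _ = (h ^ n * ∑' i, (e i) ^ 2) * M := by field_simp

theorem stmt13 {n : ℕ} (h : ℝ) (hh : 0 < h)
    (e : (Fin n → ℤ) → ℝ) (he : (Function.support e).Finite)
    (Δ : (Fin n → ℤ) → (Fin n → ℤ) → EuclideanSpace ℝ (Fin n))
    (hΔ : ∀ i j, Δ i j = -Δ j i)
    (w : (Fin n → ℤ) → (Fin n → ℤ) → ℝ)
    (hw0 : ∀ i j, 0 ≤ w i j) (hws : ∀ i j, w i j = w j i)
    (N : (Fin n → ℤ) → (Fin n → ℤ) → EuclideanSpace ℝ (Fin n))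
    (hN : ∀ i j, ‖N i j‖ = 1)
    (Λ : Set ((Fin n → ℤ) × (Fin n → ℤ)))
    (hΛ : ∀ i j, i ≠ j → Xor' ((i, j) ∈ Λ) ((j, i) ∈ Λ))
    (hsum : ∀ i, Summable fun j => ‖Δ i j‖ * w i j)
    (M : ℝ) (hM : ∀ i, h ^ n * ∑' j, ‖Δ i j‖ * w i j ≤ M) :
    |h ^ (2 * n) * ∑' p : Λ, e p.1.1 * e p.1.2 *
        (w p.1.1 p.1.2 * (inner ℝ (Δ p.1.1 p.1.2) (N p.1.1 p.1.2) : ℝ))|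
      ≤ (h ^ n * ∑' i, (e i) ^ 2) * M :=
  stmt13_general h hh e he Δ hΔ w hw0 hws N hN Λ hsum M hM
end
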